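/- Let K be a loop-free unital free augmented directed complex, let x ∈ νK, let q ≥ 0 and let α be a sign. If a and a′ are distinct basis elements in the support of x_{q+1}^α, then ∂⁺a and ∂⁺a′ have disjoint supports, and ∂⁻a and ∂⁻a′ have disjoint supports; moreover, for every basis element a in the support of x_{q+1}^α, every basis element in the support of ∂⁺a or of ∂⁻a lies in the support of g_q^α(x). (Hence the edges and vertices of the network G_q^α(x) are well defined: each edge has at most one source vertex and at most one target vertex.) -/

import Mathlib

open Finsupp

/-- A free augmented directed complex, encoded by its distinguished graded basis:
`B` is the set of basis elements, `dim` the dimension function, `bd a` the boundary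
chain of a basis element `a`, and `eps` the augmentation (supported in dimension 0). -/
structure FADC where
  B : Type
  dim : B → ℕ
  bd : B → (B →₀ ℤ)
  eps : B → ℤ
  bd_dim : ∀ a b, b ∈ (bd a).support → dim b + 1 = dim a
  eps_dim : ∀ b, 0 < dim b → eps b = 0
  bd_bd : ∀ a : B, ((bd a).sum fun b n => n • bd b) = 0
  eps_bd : ∀ a : B, ((bd a).sum fun b n => n * eps b) = 0

namespace FADC

variable (K : FADC)

/-- The boundary homomorphism `∂`, extended to chains. -/
noncomputable def bdc (c : K.B →₀ ℤ) : K.B →₀ ℤ := c.sum fun b n => n • K.bd b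

/-- The augmentation `ε`, extended to chains. -/
noncomputable def epsc (c : K.B →₀ ℤ) : ℤ := c.sum fun b n => n * K.eps b

/-- `∂⁺c`, the positive part of `∂c`. -/
noncomputable def bdp (c : K.B →₀ ℤ) : K.B →₀ ℤ := (K.bdc c).mapRange (fun n => max n 0) (by simp)

/-- `∂⁻c`, the negative part of `∂c`. -/
noncomputable def bdm (c : K.B →₀ ℤ) : K.B →₀ ℤ := (-K.bdc c).mapRange (fun n => max n 0) (by simp)

/-- `K` is unital if `ε((∂⁻)^q a) = ε((∂⁺)^q a) = 1` for every `q`-dimensional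
basis element `a`. -/
def Unital : Prop := ∀ a : K.B,
  K.epsc (K.bdm^[K.dim a] (Finsupp.single a 1)) = 1 ∧
  K.epsc (K.bdp^[K.dim a] (Finsupp.single a 1)) = 1

/-- `K` is loop-free if its basis elements admit a (strict) partial order such that
for every basis element `a` and every `r > 0`, the basis elements occurring in
`(∂⁻)^r a` strictly precede those occurring in `(∂⁺)^r a`. -/
def LoopFree : Prop :=
  ∃ lt : K.B → K.B → Prop, IsStrictOrder K.B lt ∧
    ∀ (a : K.B) (r : ℕ), 0 < r →
      ∀ b ∈ (K.bdm^[r] (Finsupp.single a 1)).support,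
        ∀ b' ∈ (K.bdp^[r] (Finsupp.single a 1)).support, lt b b'

/-- `K` is atomic of dimension `n`. -/
def Atomic (n : ℕ) : Prop :=
  (∀ b : K.B, K.dim b ≤ n) ∧
  (∃! g : K.B, K.dim g = n) ∧
  (∀ b : K.B, K.dim b < n → ∃ a : K.B, K.dim b < K.dim a ∧
    (b ∈ (K.bdm (Finsupp.single a 1)).support ∨ b ∈ (K.bdp (Finsupp.single a 1)).support))

/-- `g_q^α(x)`: given `x_q^- = xq` and `x_{q+1}^α = c`, this is
`x_q^- + ∂⁺a_1 + … + ∂⁺a_k` where `a_1, …, a_k` are the terms of `c`. -/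
noncomputable def gch (xq c : K.B →₀ ℤ) : K.B →₀ ℤ :=
  xq + c.sum fun b n => n • K.bdp (Finsupp.single b 1)

/-- The negative chains `⟨K⟩_q^- = (∂⁻)^{n-q} g` of the canonical atom. -/
noncomputable def atomNeg (g : K.B) (n q : ℕ) : K.B →₀ ℤ :=
  if q ≤ n then K.bdm^[n - q] (Finsupp.single g 1) else 0

/-- The positive chains `⟨K⟩_q^+ = (∂⁺)^{n-q} g` of the canonical atom. -/
noncomputable def atomPos (g : K.B) (n q : ℕ) : K.B →₀ ℤ :=
  if q ≤ n then K.bdp^[n - q] (Finsupp.single g 1) else 0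

end FADC

/-- Membership in `νK`: the double sequence `(x_0^-, x_0^+ | x_1^-, x_1^+ | …)`,
given by `xm` and `xp`, is a member of `νK`. -/
structure NuMem (K : FADC) (xm xp : ℕ → (K.B →₀ ℤ)) : Prop where
  dim_m : ∀ q, ∀ b ∈ (xm q).support, K.dim b = q
  dim_p : ∀ q, ∀ b ∈ (xp q).support, K.dim b = q
  nonneg_m : ∀ q b, 0 ≤ xm q b
  nonneg_p : ∀ q b, 0 ≤ xp q b
  fin : ∃ n, ∀ q, n < q → xm q = 0 ∧ xp q = 0
  eps_m : K.epsc (xm 0) = 1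
  eps_p : K.epsc (xp 0) = 1
  bd_m : ∀ q, K.bdc (xm (q + 1)) = xp q - xm q
  bd_p : ∀ q, K.bdc (xp (q + 1)) = xp q - xm q

/-- `K` together with the class `thin` of thin basis elements is an
`n`-dimensional opetopic directed complex. -/
structure IsODC (K : FADC) (thin : K.B → Prop) (n : ℕ) : Prop where
  atomic : K.Atomic n
  loopFree : K.LoopFree
  unital : K.Unital
  thin_pos : ∀ b, thin b → 0 < K.dim b
  bdp_basis : ∀ b : K.B, 0 < K.dim b →
    ∃ a : K.B, ¬ thin a ∧ K.bdp (Finsupp.single b 1) = Finsupp.single a 1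
  bdm_thin : ∀ b : K.B, thin b →
    ∃ a : K.B, ¬ thin a ∧ K.bdm (Finsupp.single b 1) = Finsupp.single a 1

/-- An opetopic directed complex is reduced if every thin basis element is `∂⁻a`
for some other basis element `a`. -/
def ODCReduced (K : FADC) (thin : K.B → Prop) : Prop :=
  ∀ b, thin b → ∃ a, a ≠ b ∧ K.bdm (Finsupp.single a 1) = Finsupp.single b 1

/-- A network: finite sets of edges and vertices with partially defined source and
target functions; input edges are those with no source, output edges those with no
target. -/
structure Network where
  E : Type
  V : Type
  finE : Finite E
  finV : Finite V
  src : E → Option V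
  tgt : E → Option V

namespace Network

variable (N : Network)

/-- One step of a path: the target of `e` is the source of `e'`. -/
def step (e e' : N.E) : Prop := ∃ v : N.V, N.tgt e = some v ∧ N.src e' = some v

/-- There is a path from `e` to `e'`. -/
def PathTo (e e' : N.E) : Prop := Relation.ReflTransGen N.step e e'

/-- A network is acyclic if there is no nontrivial path from an edge to itself. -/
def Acyclic : Prop := ∀ e : N.E, ¬ Relation.TransGen N.step e e

/-- A network is linear if it is acyclic and consists of a single path
`e_0, v_1, e_1, …, v_k, e_k`. -/
def Linear : Prop := N.Acyclic ∧
  ∃ (k : ℕ) (e : Fin (k + 1) ≃ N.E) (v : Fin k ≃ N.V),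
    N.src (e 0) = none ∧ N.tgt (e (Fin.last k)) = none ∧
    ∀ i : Fin k, N.tgt (e i.castSucc) = some (v i) ∧ N.src (e i.succ) = some (v i)

/-- A network is confluent if it is acyclic, has a unique output edge, and every
vertex is the source of exactly one edge and the target of at least one edge. -/
def Confluent : Prop := N.Acyclic ∧ (∃! e : N.E, N.tgt e = none) ∧
  (∀ v : N.V, ∃! e : N.E, N.src e = some v) ∧ (∀ v : N.V, ∃ e : N.E, N.tgt e = some v)

end Network

/-- An opetopic network: an acyclic network with a unique output edge, together with
thin edges (which are inputs) and thin vertices (each the target of exactly one edge,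
which is not thin). -/
structure OpetopicNetwork extends Network where
  thinE : E → Prop
  thinV : V → Prop
  acyclic : toNetwork.Acyclic
  out_unique : ∃! e : E, tgt e = none
  thinE_input : ∀ e, thinE e → src e = none
  thinV_unique : ∀ v, thinV v → ∃! e, tgt e = some v
  thinV_nonthin : ∀ v e, thinV v → tgt e = some v → ¬ thinE e

/-- An opetopic network is reduced if every thin edge has a target vertex which is
the target of no other edge. -/
def OpetopicNetwork.Reduced (N : OpetopicNetwork) : Prop :=
  ∀ e, N.thinE e → ∃ v, N.tgt e = some v ∧ ∀ e', N.tgt e' = some v → e' = e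

/-- `c` is a constellation from `N` to `P`: a bijection from the vertices of `N` to
the input edges of `P`, preserving thinness, such that for every edge `e` of `P`
there is exactly one edge of `N` with a source but not a target in the preimage of
`I_e` (the input edges of `P` from which there is a path to `e`). -/
def IsConstellation (N P : OpetopicNetwork) (c : N.V → P.E) : Prop :=
  (∀ v, P.src (c v) = none) ∧
  Function.Injective c ∧
  (∀ e : P.E, P.src e = none → ∃ v, c v = e) ∧
  (∀ v, N.thinV v ↔ P.thinE (c v)) ∧
  (∀ e : P.E, ∃! e' : N.E,
    (∃ v, N.src e' = some v ∧ P.toNetwork.PathTo (c v) e) ∧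
    ¬ (∃ v, N.tgt e' = some v ∧ P.toNetwork.PathTo (c v) e))

/-- An `n`-dimensional opetopic sequence `N_0 → N_1 → … → N_n`. -/
structure OpetopicSequence (n : ℕ) where
  N : Fin (n + 1) → OpetopicNetwork
  c : ∀ q : Fin n, (N q.castSucc).V → (N q.succ).E
  constell : ∀ q : Fin n, IsConstellation (N q.castSucc) (N q.succ) (c q)
  linear0 : (N 0).toNetwork.Linear
  noThin0 : ∀ e, ¬ (N 0).thinE e
  top_single : ∃! _e : (N (Fin.last n)).E, True
  top_noV : IsEmpty (N (Fin.last n)).V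

/-- An isomorphism of opetopic sequences: families of bijections on edges and
vertices preserving sources, targets, thin edges and thin vertices, and commuting
with the constellations. -/
def SeqIso (n : ℕ) (S S' : OpetopicSequence n) : Prop :=
  ∃ (fE : ∀ q : Fin (n + 1), (S.N q).E ≃ (S'.N q).E)
    (fV : ∀ q : Fin (n + 1), (S.N q).V ≃ (S'.N q).V),
    (∀ q : Fin (n + 1),
      (∀ e v, (S.N q).src e = some v ↔ (S'.N q).src (fE q e) = some (fV q v)) ∧
      (∀ e v, (S.N q).tgt e = some v ↔ (S'.N q).tgt (fE q e) = some (fV q v)) ∧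
      (∀ e, (S.N q).thinE e ↔ (S'.N q).thinE (fE q e)) ∧
      (∀ v, (S.N q).thinV v ↔ (S'.N q).thinV (fV q v))) ∧
    (∀ q : Fin n, ∀ v, fE q.succ (S.c q v) = S'.c q (fV q.castSucc v))

/-- The opetopic sequence `S` realizes the sequence
`G_0^-(⟨K⟩) → … → G_n^-(⟨K⟩)` associated to the opetopic directed complex `K`
(with top basis element `g` and thin elements `thin`): the edges of `S.N q`
correspond bijectively to the terms of `g_q^-(⟨K⟩)`, the vertices to the terms of
`⟨K⟩_{q+1}^-`, sources, targets and thinness are as prescribed by `∂⁺`, `∂⁻` and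
`thin`, and the constellations are the identity correspondences. -/
def RealizedBy (K : FADC) (thin : K.B → Prop) (n : ℕ) (g : K.B)
    (S : OpetopicSequence n) : Prop :=
  ∃ (eE : ∀ q : Fin (n + 1), (S.N q).E → K.B)
    (eV : ∀ q : Fin (n + 1), (S.N q).V → K.B),
    (∀ q : Fin (n + 1),
      Function.Injective (eE q) ∧
      (∀ ed, eE q ed ∈ (K.gch (K.atomNeg g n q.1) (K.atomNeg g n (q.1 + 1))).support) ∧
      (∀ b ∈ (K.gch (K.atomNeg g n q.1) (K.atomNeg g n (q.1 + 1))).support,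
        ∃ ed, eE q ed = b) ∧
      Function.Injective (eV q) ∧
      (∀ v, eV q v ∈ (K.atomNeg g n (q.1 + 1)).support) ∧
      (∀ b ∈ (K.atomNeg g n (q.1 + 1)).support, ∃ v, eV q v = b) ∧
      (∀ ed v, (S.N q).src ed = some v ↔
        eE q ed ∈ (K.bdp (Finsupp.single (eV q v) 1)).support) ∧
      (∀ ed v, (S.N q).tgt ed = some v ↔
        eE q ed ∈ (K.bdm (Finsupp.single (eV q v) 1)).support) ∧
      (∀ ed, (S.N q).thinE ed ↔ thin (eE q ed)) ∧
      (∀ v, (S.N q).thinV v ↔ thin (eV q v))) ∧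
    (∀ q : Fin n, ∀ v, eE q.succ (S.c q v) = eV q.castSucc v)

/-- A bundled `n`-dimensional opetopic directed complex. -/
structure ODCBundle (n : ℕ) where
  K : FADC
  thin : K.B → Prop
  g : K.B
  dim_g : K.dim g = n
  isODC : IsODC K thin n

/-- Isomorphism of (bundled) opetopic directed complexes: a dimension- and
thinness-preserving bijection of bases commuting with boundaries and augmentations. -/
def ODCIso {n : ℕ} (A A' : ODCBundle n) : Prop :=
  ∃ φ : A.K.B ≃ A'.K.B,
    (∀ b, A'.K.dim (φ b) = A.K.dim b) ∧
    (∀ b, A'.thin (φ b) ↔ A.thin b) ∧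
    (∀ b, A'.K.bd (φ b) = Finsupp.equivMapDomain φ (A.K.bd b)) ∧
    (∀ b, A'.K.eps (φ b) = A.K.eps b)


/-!
Both claims follow once every coefficient of `g = g_q^α(x)` is at most one, because
`g = x_q^- + Σ c_a ∂⁺a = x_q^+ + Σ c_a ∂⁻a` (where `c = x_{q+1}^α`) is a sum of nonnegative
chains. This bound is proved by induction on the total multiplicity of `c`. Loop-freeness
provides a term `a` of `c` such that no face of `∂⁺a` occurs in `∂⁻a'` for a term `a'` of `c`;
at those faces `g` coincides with `x_q^+`, and at all other faces `g` is unchanged when one copy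
of `a` is removed from `c` and `∂a` from `x_q^+`, which again gives an element of `νK`.
It remains to know that `x_q^+` has coefficients at most one. In dimension `0` this follows from
`ε x_0^+ = 1` and unitality; in dimension `q + 1`, each term `a` of `x_{q+1}^+` has a face in
`∂⁺a` by unitality, and the coefficient of `a` is bounded by that of the face in `g_q^+(x)`.
-/

section NonnegCombination

variable {α β : Type*} {w : β →₀ ℤ} {c : α →₀ ℤ} {f : α → β →₀ ℤ}

lemma one_le_apply_of_mem_support {g : α →₀ ℤ} (hg : ∀ a, 0 ≤ g a) {a : α}
    (ha : a ∈ g.support) : 1 ≤ g a :=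
  lt_of_le_of_ne (hg a) (Ne.symm (mem_support_iff.1 ha))

lemma mul_apply_le_linearCombination_apply (hc : ∀ a, 0 ≤ c a) (hf : ∀ a b, 0 ≤ f a b)
    {a : α} (ha : a ∈ c.support) (b : β) :
    c a * f a b ≤ linearCombination ℤ f c b := by
  rw [linearCombination_apply, Finsupp.sum_apply]
  exact Finset.single_le_sum (f := fun a => (c a • f a) b)
    (fun a _ => mul_nonneg (hc a) (hf a b)) ha

lemma mul_apply_add_mul_apply_le_linearCombination_apply (hc : ∀ a, 0 ≤ c a)
    (hf : ∀ a b, 0 ≤ f a b) {a a' : α} (ha : a ∈ c.support) (ha' : a' ∈ c.support)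
    (hne : a ≠ a') (b : β) :
    c a * f a b + c a' * f a' b ≤ linearCombination ℤ f c b := by
  rw [linearCombination_apply, Finsupp.sum_apply]
  classical
  have hpair : ({a, a'} : Finset α) ⊆ c.support := Finset.insert_subset ha (by simpa using ha')
  calc c a * f a b + c a' * f a' b = ∑ x ∈ {a, a'}, (c x • f x) b :=
        (Finset.sum_pair (f := fun x => (c x • f x) b) hne).symm
    _ ≤ _ := Finset.sum_le_sum_of_subset_of_nonneg hpair
      (fun x _ _ => mul_nonneg (hc x) (hf x b))

lemma mem_support_add_linearCombination (hw : ∀ b, 0 ≤ w b) (hc : ∀ a, 0 ≤ c a)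
    (hf : ∀ a b, 0 ≤ f a b) {a : α} (ha : a ∈ c.support) {b : β} (hb : b ∈ (f a).support) :
    b ∈ (w + linearCombination ℤ f c).support := by
  have h1 := one_le_apply_of_mem_support hc ha
  have h2 := one_le_apply_of_mem_support (hf a) hb
  have h3 := mul_apply_le_linearCombination_apply hc hf ha b
  rw [mem_support_iff, Finsupp.add_apply]
  nlinarith [hw b]

lemma disjoint_support_of_add_linearCombination_le_one (hw : ∀ b, 0 ≤ w b)
    (hc : ∀ a, 0 ≤ c a) (hf : ∀ a b, 0 ≤ f a b)
    (hle : ∀ b, (w + linearCombination ℤ f c) b ≤ 1) {a a' : α} (ha : a ∈ c.support)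
    (ha' : a' ∈ c.support) (hne : a ≠ a') : Disjoint (f a).support (f a').support := by
  refine Finset.disjoint_left.2 fun b hb hb' => ?_
  have h1 := one_le_apply_of_mem_support hc ha
  have h1' := one_le_apply_of_mem_support hc ha'
  have h2 := one_le_apply_of_mem_support (hf a) hb
  have h2' := one_le_apply_of_mem_support (hf a') hb'
  have h3 := mul_apply_add_mul_apply_le_linearCombination_apply hc hf ha ha' hne b
  have h4 := hle b
  rw [Finsupp.add_apply] at h4
  nlinarith [hw b]

end NonnegCombination

lemma Finset.exists_forall_not_rel {α : Type*} {r : α → α → Prop} (s : Finset α)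
    (hs : s.Nonempty) (hr : ∀ a ∈ s, ¬ Relation.TransGen r a a) :
    ∃ m ∈ s, ∀ a ∈ s, ¬ r m a := by
  let R : s → s → Prop := fun x y => Relation.TransGen r y x
  have : IsTrans s R := ⟨fun _ _ _ hxy hyz => hyz.trans hxy⟩
  have : Std.Irrefl R := ⟨fun x => hr x x.2⟩
  obtain ⟨m, -, hm⟩ := (Finite.wellFounded_of_trans_of_irrefl R).has_min Set.univ
    ⟨⟨_, hs.choose_spec⟩, trivial⟩
  exact ⟨m, m.2, fun a ha hma => hm ⟨a, ha⟩ trivial (.single hma)⟩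

def truncWith {M : Type*} [Zero M] (f : ℕ → M) (q : ℕ) (w z : M) : ℕ → M :=
  fun r => if r < q then f r else if r = q then w else if r = q + 1 then z else 0

@[simp]
lemma truncWith_self {M : Type*} [Zero M] (f : ℕ → M) (q : ℕ) (w z : M) :
    truncWith f q w z q = w := by
  simp [truncWith]

@[simp]
lemma truncWith_succ {M : Type*} [Zero M] (f : ℕ → M) (q : ℕ) (w z : M) :
    truncWith f q w z (q + 1) = z := by
  simp [truncWith]

namespace FADC

variable {K : FADC}

lemma bdc_eq_linearCombination (c : K.B →₀ ℤ) : K.bdc c = linearCombination ℤ K.bd c := by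
  rw [linearCombination_apply]; rfl

lemma epsc_eq_linearCombination (c : K.B →₀ ℤ) : K.epsc c = linearCombination ℤ K.eps c := by
  simp only [epsc, linearCombination_apply, smul_eq_mul]

lemma bdc_sub (c d : K.B →₀ ℤ) : K.bdc (c - d) = K.bdc c - K.bdc d := by
  simp only [bdc_eq_linearCombination, map_sub]

lemma epsc_sub (c d : K.B →₀ ℤ) : K.epsc (c - d) = K.epsc c - K.epsc d := by
  simp only [epsc_eq_linearCombination, map_sub]

lemma bdc_single (a : K.B) : K.bdc (single a 1) = K.bd a := by
  simp [bdc_eq_linearCombination]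

lemma bdc_zero : K.bdc 0 = 0 := by
  simp [bdc_eq_linearCombination]

lemma bdp_apply (c : K.B →₀ ℤ) (b : K.B) : K.bdp c b = max (K.bdc c b) 0 := rfl

lemma bdm_apply (c : K.B →₀ ℤ) (b : K.B) : K.bdm c b = max (-K.bdc c b) 0 := rfl

lemma bdp_apply_nonneg (c : K.B →₀ ℤ) (b : K.B) : 0 ≤ K.bdp c b := le_max_right _ _

lemma bdm_apply_nonneg (c : K.B →₀ ℤ) (b : K.B) : 0 ≤ K.bdm c b := le_max_right _ _

lemma bdp_sub_bdm (c : K.B →₀ ℤ) : K.bdp c - K.bdm c = K.bdc c := by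
  ext b
  rw [Finsupp.sub_apply, bdp_apply, bdm_apply]
  omega

lemma bdp_zero : K.bdp 0 = 0 := by
  ext b
  simp [bdp_apply, bdc_zero]

lemma mem_support_bdp_single {a b : K.B} :
    b ∈ (K.bdp (single a 1)).support ↔ 0 < K.bd a b := by
  rw [mem_support_iff, bdp_apply, bdc_single]; omega

lemma mem_support_bdm_single {a b : K.B} :
    b ∈ (K.bdm (single a 1)).support ↔ K.bd a b < 0 := by
  rw [mem_support_iff, bdm_apply, bdc_single]; omega

lemma gch_eq (xq c : K.B →₀ ℤ) :
    K.gch xq c = xq + linearCombination ℤ (fun a => K.bdp (single a 1)) c := by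
  rw [linearCombination_apply]; rfl

lemma gch_eq_add_linearCombination_bdm {xm xp c : K.B →₀ ℤ} (h : K.bdc c = xp - xm) :
    K.gch xm c = xp + linearCombination ℤ (fun a => K.bdm (single a 1)) c := by
  have hsplit : linearCombination ℤ (fun a => K.bdp (single a 1)) c =
      K.bdc c + linearCombination ℤ (fun a => K.bdm (single a 1)) c := by
    simp only [bdc_eq_linearCombination, linearCombination_apply, ← Finsupp.sum_add]
    congr! 2 with a
    ext1 n
    rw [← smul_add, ← bdc_single, ← bdp_sub_bdm, sub_add_cancel]
  rw [gch_eq, hsplit, h]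
  abel

lemma Unital.eps_eq_one (hU : K.Unital) {a : K.B} (ha : K.dim a = 0) : K.eps a = 1 := by
  simpa [ha, epsc] using (hU a).1

lemma Unital.bdp_single_ne_zero (hU : K.Unital) {a : K.B} (ha : K.dim a ≠ 0) :
    K.bdp (single a 1) ≠ 0 := by
  intro h
  obtain ⟨r, hr⟩ := Nat.exists_eq_succ_of_ne_zero ha
  have h1 := (hU a).2
  rw [hr, Function.iterate_succ_apply, h, Function.iterate_fixed bdp_zero] at h1
  simp [epsc] at h1

lemma Unital.apply_le_one_of_epsc_eq_one (hU : K.Unital) {w : K.B →₀ ℤ}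
    (hw : ∀ b, 0 ≤ w b) (hdim : ∀ b ∈ w.support, K.dim b = 0) (h : K.epsc w = 1) (b : K.B) :
    w b ≤ 1 := by
  have hsum : K.epsc w = ∑ a ∈ w.support, w a := by
    rw [epsc, Finsupp.sum]
    exact Finset.sum_congr rfl fun a ha => by rw [hU.eps_eq_one (hdim a ha), mul_one]
  by_cases hb : b ∈ w.support
  · exact h ▸ hsum ▸ Finset.single_le_sum (fun a _ => hw a) hb
  · simp [notMem_support_iff.1 hb]

lemma le_gch_apply {xq c : K.B →₀ ℤ} (hxq : ∀ b, 0 ≤ xq b) (hc : ∀ a, 0 ≤ c a) {a : K.B}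
    (ha : a ∈ c.support) (b : K.B) : c a * K.bdp (single a 1) b ≤ K.gch xq c b := by
  have := mul_apply_le_linearCombination_apply hc (f := fun a => K.bdp (single a 1))
    (fun a => K.bdp_apply_nonneg _) ha b
  rw [gch_eq, Finsupp.add_apply]
  linarith [hxq b]

lemma gch_sub_single (xq c : K.B →₀ ℤ) (a : K.B) :
    K.gch xq (c - single a 1) = K.gch xq c - K.bdp (single a 1) := by
  rw [gch_eq, gch_eq, map_sub, linearCombination_single, one_smul, add_sub_assoc]

lemma gch_apply_eq_of_forall_nonneg {xm xp c : K.B →₀ ℤ} (h : K.bdc c = xp - xm) {b : K.B}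
    (hb : ∀ a ∈ c.support, 0 ≤ K.bd a b) : K.gch xm c b = xp b := by
  rw [gch_eq_add_linearCombination_bdm h, Finsupp.add_apply, linearCombination_apply,
    Finsupp.sum_apply, add_eq_left]
  refine Finset.sum_eq_zero fun a ha => ?_
  change c a • K.bdm (single a 1) b = 0
  rw [bdm_apply, bdc_single, max_eq_right (by linarith [hb a ha]), smul_zero]

def Precedes (K : FADC) (a a' : K.B) : Prop := ∃ b, 0 < K.bd a b ∧ K.bd a' b < 0

lemma exists_lt_of_transGen_precedes {lt : K.B → K.B → Prop} [IsTrans K.B lt]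
    (hlf : ∀ a b b', K.bd a b < 0 → 0 < K.bd a b' → lt b b') {a a' : K.B}
    (h : Relation.TransGen K.Precedes a a') {b' : K.B} (hb' : 0 < K.bd a' b') :
    ∃ b, 0 < K.bd a b ∧ lt b b' := by
  induction h generalizing b' with
  | single h =>
    obtain ⟨b, hb, hb_neg⟩ := h
    exact ⟨b, hb, hlf _ _ _ hb_neg hb'⟩
  | tail _ h ih =>
    obtain ⟨b₀, hb₀, hb₀_neg⟩ := h
    obtain ⟨b, hb, hlt⟩ := ih hb₀
    exact ⟨b, hb, _root_.trans hlt (hlf _ _ _ hb₀_neg hb')⟩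

lemma LoopFree.not_transGen_precedes_self (hLF : K.LoopFree) (hU : K.Unital) {a : K.B}
    (ha : K.dim a ≠ 0) : ¬ Relation.TransGen K.Precedes a a := by
  obtain ⟨lt, hso, hlf⟩ := hLF
  have hlf₁ : ∀ a b b', K.bd a b < 0 → 0 < K.bd a b' → lt b b' := fun a b b' hb hb' =>
    hlf a 1 one_pos b (mem_support_bdm_single.2 hb) b' (mem_support_bdp_single.2 hb')
  intro h
  -- an `lt`-minimal face of `∂⁺a` would need a smaller one in `∂⁺a`, by `h`
  obtain ⟨m, hm, hmin⟩ := (K.bdp (single a 1)).support.exists_forall_not_rel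
    (r := Function.swap lt) (support_nonempty_iff.2 (hU.bdp_single_ne_zero ha))
    fun b _ hb => hso.irrefl b (Relation.transGen_eq_self (r := lt) ▸ Relation.transGen_swap.1 hb)
  obtain ⟨b, hb, hlt⟩ := exists_lt_of_transGen_precedes hlf₁ h (mem_support_bdp_single.1 hm)
  exact hmin b (mem_support_bdp_single.2 hb) hlt

lemma LoopFree.exists_forall_not_precedes (hLF : K.LoopFree) (hU : K.Unital)
    {s : Finset K.B} (hs : s.Nonempty) (hdim : ∀ a ∈ s, K.dim a ≠ 0) :
    ∃ m ∈ s, ∀ a ∈ s, ¬ K.Precedes m a :=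
  s.exists_forall_not_rel hs fun a ha => hLF.not_transGen_precedes_self hU (hdim a ha)

end FADC

namespace NuMem

open FADC

variable {K : FADC} {xm xp : ℕ → (K.B →₀ ℤ)} {q : ℕ} {c : K.B →₀ ℤ}

lemma bdc_eq_of_eq_or_eq (hx : NuMem K xm xp) (hc : c = xm (q + 1) ∨ c = xp (q + 1)) :
    K.bdc c = xp q - xm q := by
  rcases hc with rfl | rfl
  exacts [hx.bd_m q, hx.bd_p q]

lemma nonneg_of_eq_or_eq (hx : NuMem K xm xp) (hc : c = xm q ∨ c = xp q) (a : K.B) :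
    0 ≤ c a := by
  rcases hc with rfl | rfl
  exacts [hx.nonneg_m q a, hx.nonneg_p q a]

lemma dim_eq_of_eq_or_eq (hx : NuMem K xm xp) (hc : c = xm q ∨ c = xp q) :
    ∀ a ∈ c.support, K.dim a = q := by
  rcases hc with rfl | rfl
  exacts [hx.dim_m q, hx.dim_p q]

lemma truncWith (hx : NuMem K xm xp) {wp z : K.B →₀ ℤ}
    (hwp : ∀ b, 0 ≤ wp b) (hwp_dim : ∀ b ∈ wp.support, K.dim b = q)
    (hwp_bdc : K.bdc wp = K.bdc (xp q)) (hwp_epsc : K.epsc wp = K.epsc (xp q))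
    (hz : ∀ b, 0 ≤ z b) (hz_dim : ∀ b ∈ z.support, K.dim b = q + 1)
    (hz_bdc : K.bdc z = wp - xm q) :
    NuMem K (truncWith xm q (xm q) z) (truncWith xp q wp z) where
  dim_m r b hb := by
    unfold _root_.truncWith at hb
    split_ifs at hb with h₁ h₂ h₃
    · exact hx.dim_m r b hb
    · exact h₂ ▸ hx.dim_m q b hb
    · exact h₃ ▸ hz_dim b hb
    · simp at hb
  dim_p r b hb := by
    unfold _root_.truncWith at hb
    split_ifs at hb with h₁ h₂ h₃
    · exact hx.dim_p r b hb
    · exact h₂ ▸ hwp_dim b hb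
    · exact h₃ ▸ hz_dim b hb
    · simp at hb
  nonneg_m r b := by
    unfold _root_.truncWith
    split_ifs
    exacts [hx.nonneg_m r b, hx.nonneg_m q b, hz b, le_rfl]
  nonneg_p r b := by
    unfold _root_.truncWith
    split_ifs
    exacts [hx.nonneg_p r b, hwp b, hz b, le_rfl]
  fin := ⟨q + 1, fun r hr => by
    simp [_root_.truncWith, show ¬ r < q by omega, show r ≠ q by omega, show r ≠ q + 1 by omega]⟩
  eps_m := by
    unfold _root_.truncWith
    split_ifs with h₁ h₂
    · exact hx.eps_m
    · exact h₂ ▸ hx.eps_m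
    all_goals omega
  eps_p := by
    unfold _root_.truncWith
    split_ifs with h₁ h₂
    · exact hx.eps_p
    · subst h₂; exact hwp_epsc.trans hx.eps_p
    all_goals omega
  bd_m r := by
    rcases lt_trichotomy (r + 1) q with h | h | h
    · simpa [_root_.truncWith, h, (Nat.lt_succ_self r).trans h] using hx.bd_m r
    · subst h; simpa [_root_.truncWith] using hx.bd_m r
    · rcases Nat.lt_or_ge r (q + 1) with h' | h'
      · obtain rfl : r = q := by omega
        simpa [_root_.truncWith] using hz_bdc
      · simp [_root_.truncWith, show ¬ r < q by omega, show r ≠ q by omega,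
          show ¬ r + 1 < q by omega, show r + 1 ≠ q by omega, bdc_zero]
  bd_p r := by
    rcases lt_trichotomy (r + 1) q with h | h | h
    · simpa [_root_.truncWith, h, (Nat.lt_succ_self r).trans h] using hx.bd_p r
    · subst h; simpa [_root_.truncWith, hwp_bdc] using hx.bd_p r
    · rcases Nat.lt_or_ge r (q + 1) with h' | h'
      · obtain rfl : r = q := by omega
        simpa [_root_.truncWith] using hz_bdc
      · simp [_root_.truncWith, show ¬ r < q by omega, show r ≠ q by omega,
          show ¬ r + 1 < q by omega, show r + 1 ≠ q by omega, bdc_zero]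

lemma peel (hx : NuMem K xm xp) (hc : c = xm (q + 1) ∨ c = xp (q + 1)) {a : K.B}
    (ha : a ∈ c.support) (hle : ∀ b, K.bd a b ≤ xp q b) :
    NuMem K (_root_.truncWith xm q (xm q) (c - single a 1))
      (_root_.truncWith xp q (xp q - K.bd a) (c - single a 1)) := by
  classical
  have hdim := hx.dim_eq_of_eq_or_eq hc
  have hca := one_le_apply_of_mem_support (hx.nonneg_of_eq_or_eq hc) ha
  refine hx.truncWith (fun b => ?_) (fun b hb => ?_) ?_ ?_ (fun b => ?_) (fun b hb => ?_) ?_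
  · simpa using hle b
  · rcases Finset.mem_union.1 (support_sub hb) with hb | hb
    exacts [hx.dim_p q b hb, by have := K.bd_dim a b hb; have := hdim a ha; omega]
  · rw [bdc_sub, show K.bdc (K.bd a) = 0 from K.bd_bd a, sub_zero]
  · rw [epsc_sub, show K.epsc (K.bd a) = 0 from K.eps_bd a, sub_zero]
  · rcases eq_or_ne a b with rfl | hab
    · simpa using hca
    · simpa [single_eq_of_ne' hab] using hx.nonneg_of_eq_or_eq hc b
  · rcases Finset.mem_union.1 (support_sub hb) with hb | hb
    exacts [hdim b hb, by rw [(Finset.mem_singleton.1 (support_single_subset hb))]; exact hdim a ha]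
  · rw [bdc_sub, bdc_single, hx.bdc_eq_of_eq_or_eq hc]
    abel

lemma gch_apply_eq_of_forall_not_precedes (hx : NuMem K xm xp)
    (hc : c = xm (q + 1) ∨ c = xp (q + 1)) {a : K.B} (hmax : ∀ a' ∈ c.support, ¬ K.Precedes a a')
    {b : K.B} (hb : 0 < K.bd a b) : K.gch (xm q) c b = xp q b :=
  gch_apply_eq_of_forall_nonneg (hx.bdc_eq_of_eq_or_eq hc) fun a' ha' =>
    not_lt.1 fun h => hmax a' ha' ⟨b, hb, h⟩

lemma bd_apply_le_of_forall_not_precedes (hx : NuMem K xm xp)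
    (hc : c = xm (q + 1) ∨ c = xp (q + 1)) {a : K.B} (ha : a ∈ c.support)
    (hmax : ∀ a' ∈ c.support, ¬ K.Precedes a a') (b : K.B) : K.bd a b ≤ xp q b := by
  by_cases hb : 0 < K.bd a b
  · have hcnn := hx.nonneg_of_eq_or_eq hc
    have hca := one_le_apply_of_mem_support hcnn ha
    calc K.bd a b ≤ c a * K.bdp (single a 1) b := by
          rw [bdp_apply, bdc_single, max_eq_left hb.le]; nlinarith
      _ ≤ K.gch (xm q) c b := le_gch_apply (hx.nonneg_m q) hcnn ha b
      _ = xp q b := hx.gch_apply_eq_of_forall_not_precedes hc hmax hb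
  · linarith [hx.nonneg_p q b]

lemma gch_apply_le_one (hLF : K.LoopFree) (hU : K.Unital)
    (hsimple : ∀ xm xp, NuMem K xm xp → ∀ b, xp q b ≤ 1) (hx : NuMem K xm xp)
    (hc : c = xm (q + 1) ∨ c = xp (q + 1)) (b : K.B) : K.gch (xm q) c b ≤ 1 := by
  obtain ⟨N, hN⟩ : ∃ N : ℕ, (c.sum fun _ n => n) ≤ N := ⟨_, Int.self_le_toNat _⟩
  induction N using Nat.strong_induction_on generalizing xm xp c b with
  | _ N ih =>
    rcases c.support.eq_empty_or_nonempty with hempty | hne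
    · rw [gch_apply_eq_of_forall_nonneg (hx.bdc_eq_of_eq_or_eq hc) (by simp [hempty])]
      exact hsimple _ _ hx b
    obtain ⟨a, ha, hmax⟩ := hLF.exists_forall_not_precedes hU hne
      fun a ha => by rw [hx.dim_eq_of_eq_or_eq hc a ha]; omega
    by_cases hb : 0 < K.bd a b
    · rw [hx.gch_apply_eq_of_forall_not_precedes hc hmax hb]
      exact hsimple _ _ hx b
    have hca_le : c a ≤ c.sum fun _ n => n :=
      Finset.single_le_sum (fun a _ => hx.nonneg_of_eq_or_eq hc a) ha
    have hca := one_le_apply_of_mem_support (hx.nonneg_of_eq_or_eq hc) ha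
    have hmass : ((c - single a 1).sum fun _ n => n) ≤ ↑(N - 1) := by
      rw [sum_sub_index fun _ _ _ => rfl, sum_single_index rfl]
      omega
    have hx' := hx.peel hc ha (hx.bd_apply_le_of_forall_not_precedes hc ha hmax)
    have h' := ih (N - 1) (by omega) hx' (Or.inl (truncWith_succ ..).symm) b hmass
    rwa [truncWith_self, gch_sub_single, Finsupp.sub_apply, bdp_apply, bdc_single,
      max_eq_right (not_lt.1 hb), sub_zero] at h'

lemma apply_le_one (hLF : K.LoopFree) (hU : K.Unital) (hx : NuMem K xm xp) (q : ℕ)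
    (b : K.B) : xp q b ≤ 1 := by
  induction q generalizing xm xp b with
  | zero => exact hU.apply_le_one_of_epsc_eq_one (hx.nonneg_p 0) (hx.dim_p 0) hx.eps_p b
  | succ q ih =>
    by_cases hb : b ∈ (xp (q + 1)).support
    · obtain ⟨b', hb'⟩ := support_nonempty_iff.2
        (hU.bdp_single_ne_zero (a := b) (by rw [hx.dim_p _ b hb]; omega))
      calc xp (q + 1) b ≤ xp (q + 1) b * K.bdp (single b 1) b' :=
            le_mul_of_one_le_right (hx.nonneg_p _ b)
              (one_le_apply_of_mem_support (K.bdp_apply_nonneg _) hb')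
        _ ≤ K.gch (xm q) (xp (q + 1)) b' := le_gch_apply (hx.nonneg_m q) (hx.nonneg_p _) hb b'
        _ ≤ 1 := gch_apply_le_one hLF hU (fun _ _ hy => ih hy) hx (Or.inr rfl) b'
    · rw [notMem_support_iff.1 hb]
      exact zero_le_one

end NuMem

/-- The networks `G_q^α(x)` are well defined: distinct terms `a ≠ a'` of `x_{q+1}^α`
have disjoint `∂⁺`-supports and disjoint `∂⁻`-supports, and every term of `∂⁺a` or
`∂⁻a` for `a` a term of `x_{q+1}^α` is a term of `g_q^α(x)`. -/
theorem stmt9 (K : FADC) (hLF : K.LoopFree) (hU : K.Unital)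
    (xm xp : ℕ → (K.B →₀ ℤ)) (hx : NuMem K xm xp) (q : ℕ)
    (xa : ℕ → K.B →₀ ℤ) (hxa : xa = xm ∨ xa = xp) :
    (∀ a a' : K.B, a ∈ (xa (q + 1)).support → a' ∈ (xa (q + 1)).support → a ≠ a' →
      Disjoint (K.bdp (Finsupp.single a 1)).support
        (K.bdp (Finsupp.single a' 1)).support ∧
      Disjoint (K.bdm (Finsupp.single a 1)).support
        (K.bdm (Finsupp.single a' 1)).support) ∧
    (∀ a ∈ (xa (q + 1)).support, ∀ b : K.B,
      (b ∈ (K.bdp (Finsupp.single a 1)).support ∨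
        b ∈ (K.bdm (Finsupp.single a 1)).support) →
      b ∈ (K.gch (xm q) (xa (q + 1))).support) := by
  have hc : xa (q + 1) = xm (q + 1) ∨ xa (q + 1) = xp (q + 1) := by
    rcases hxa with rfl | rfl <;> simp
  have hcnn := hx.nonneg_of_eq_or_eq hc
  have hpos : ∀ a b, 0 ≤ K.bdp (single a 1) b := fun _ => K.bdp_apply_nonneg _
  have hneg : ∀ a b, 0 ≤ K.bdm (single a 1) b := fun _ => K.bdm_apply_nonneg _
  have hg_pos := FADC.gch_eq (xm q) (xa (q + 1))
  have hg_neg := FADC.gch_eq_add_linearCombination_bdm (hx.bdc_eq_of_eq_or_eq hc)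
  have hg : ∀ b, K.gch (xm q) (xa (q + 1)) b ≤ 1 :=
    hx.gch_apply_le_one hLF hU (fun _ _ hy => hy.apply_le_one hLF hU q) hc
  refine ⟨fun a a' ha ha' hne => ⟨?_, ?_⟩, fun a ha b hb => ?_⟩
  · exact disjoint_support_of_add_linearCombination_le_one (hx.nonneg_m q) hcnn hpos
      (hg_pos ▸ hg) ha ha' hne
  · exact disjoint_support_of_add_linearCombination_le_one (hx.nonneg_p q) hcnn hneg
      (hg_neg ▸ hg) ha ha' hne
  · rcases hb with hb | hb
    · exact hg_pos ▸ mem_support_add_linearCombination (hx.nonneg_m q) hcnn hpos ha hb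
    · exact hg_neg ▸ mem_support_add_linearCombination (hx.nonneg_p q) hcnn hneg ha hb
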